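/- In a propositional resolution proof, if in every path from a node η to the root there is a resolution step with pivot p where the p-side premise lies on the path (i.e., p is 'safe' for η), then deleting an occurrence of p from the clause at η still yields (after fixing the proof) a root clause that subsumes the original root clause. -/

import Mathlib

/-- Propositional literals over atoms `A`. -/
inductive PLit (A : Type) : Type
  | pos : A → PLit A
  | neg : A → PLit A
deriving DecidableEq

variable {A : Type} [DecidableEq A]

/-- Propositional resolution proofs (as trees), indexed by their conclusion clause.
Leaves are input clauses; a resolution node with pivot `p` derives
`(Cl \ {p}) ∪ (Cr \ {¬p})` from a left premise `Cl` (contributing `p`) and a right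
premise `Cr` (contributing `¬p`). -/
inductive Prf (A : Type) [DecidableEq A] : Finset (PLit A) → Type
  | ax : (C : Finset (PLit A)) → Prf A C
  | res : {Cl Cr : Finset (PLit A)} → (p : A) →
      Prf A Cl → Prf A Cr → Prf A ((Cl.erase (.pos p)) ∪ (Cr.erase (.neg p)))

/-- The subproof at a path (list of directions from the root; `false` = left premise,
`true` = right premise), if the path is valid. -/
def subAt : {C : Finset (PLit A)} → Prf A C → List Bool →
    Option ((D : Finset (PLit A)) × Prf A D)
  | C, π, [] => some ⟨C, π⟩
  | _, .res _ πl _, false :: s => subAt πl s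
  | _, .res _ _ πr, true :: s => subAt πr s
  | _, .ax _, _ :: _ => none

/-- The literal `ℓ` is safe for the node at path `s`: on (every =) the path from the
node to the root there is a resolution step with pivot `|ℓ|` whose `ℓ`-side premise
lies on the path (so `ℓ` is resolved away there). -/
def SafeAt : {C : Finset (PLit A)} → Prf A C → List Bool → PLit A → Prop
  | _, .res p πl _, false :: s, ℓ => ℓ = PLit.pos p ∨ SafeAt πl s ℓ
  | _, .res p _ πr, true :: s, ℓ => ℓ = PLit.neg p ∨ SafeAt πr s ℓ
  | _, _, _, _ => False

/-- Replace the subproof at path `s` by the proof `r` and fix the proof below: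
each resolution on the path is rebuilt, and a resolution whose pivot no longer
occurs in the fixed premise is dropped (replaced by that premise). -/
def fixAt : {C : Finset (PLit A)} → Prf A C → List Bool →
    ((D : Finset (PLit A)) × Prf A D) → ((D : Finset (PLit A)) × Prf A D)
  | _, _, [], r => r
  | _, .res p πl πr, false :: s, r =>
      let x := fixAt πl s r
      if PLit.pos p ∈ x.1 then ⟨_, .res p x.2 πr⟩ else x
  | _, .res p πl πr, true :: s, r =>
      let x := fixAt πr s r
      if PLit.neg p ∈ x.1 then ⟨_, .res p πl x.2⟩ else x
  | C, π, _ :: _, _ => ⟨C, π⟩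

/- Fixing is monotone: each resolution on the path is either rebuilt from a premise that
gained at most what the replacement gained, or dropped because its pivot literal
disappeared, which only shrinks the conclusion. So a replacement adding at most a literal
`ℓ` to the node's clause makes the root clause gain at most `ℓ`; if `ℓ` is safe, the
resolution on the path that resolves `ℓ` away erases it again (or is dropped), and below
it nothing has been gained. -/

variable {Cl Cr : Finset (PLit A)}

theorem fixAt_res_false_subset (q : A) (πl : Prf A Cl) (πr : Prf A Cr) (s : List Bool)
    (r : (D : Finset (PLit A)) × Prf A D) {D : Finset (PLit A)}
    (h : (fixAt πl s r).1 ⊆ insert (.pos q) D) :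
    (fixAt (.res q πl πr) (false :: s) r).1 ⊆ D.erase (.pos q) ∪ Cr.erase (.neg q) := by
  have hx : (fixAt πl s r).1.erase (.pos q) ⊆ D.erase (.pos q) := by
    simpa only [Finset.erase_insert_eq_erase] using Finset.erase_subset_erase (.pos q) h
  simp only [fixAt]
  split
  · exact Finset.union_subset_union hx Finset.Subset.rfl
  · next hq => exact (Finset.erase_eq_of_notMem hq ▸ hx).trans Finset.subset_union_left

theorem fixAt_res_true_subset (q : A) (πl : Prf A Cl) (πr : Prf A Cr) (s : List Bool)
    (r : (D : Finset (PLit A)) × Prf A D) {D : Finset (PLit A)}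
    (h : (fixAt πr s r).1 ⊆ insert (.neg q) D) :
    (fixAt (.res q πl πr) (true :: s) r).1 ⊆ Cl.erase (.pos q) ∪ D.erase (.neg q) := by
  have hx : (fixAt πr s r).1.erase (.neg q) ⊆ D.erase (.neg q) := by
    simpa only [Finset.erase_insert_eq_erase] using Finset.erase_subset_erase (.neg q) h
  simp only [fixAt]
  split
  · exact Finset.union_subset_union Finset.Subset.rfl hx
  · next hq => exact (Finset.erase_eq_of_notMem hq ▸ hx).trans Finset.subset_union_right

theorem fixAt_subset_insert (ℓ : PLit A) (s : List Bool) {C : Finset (PLit A)} (π : Prf A C)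
    (r : (D : Finset (PLit A)) × Prf A D) {Cη : Finset (PLit A)} (η : Prf A Cη)
    (hsub : subAt π s = some ⟨Cη, η⟩) (hr : r.1 ⊆ insert ℓ Cη) :
    (fixAt π s r).1 ⊆ insert ℓ C := by
  induction s generalizing C with
  | nil =>
    rw [subAt] at hsub
    obtain ⟨rfl, -⟩ := Sigma.mk.inj (Option.some.inj hsub)
    rwa [fixAt]
  | cons b s ih =>
    cases π with
    | ax => simp [subAt] at hsub
    | res q πl πr =>
      cases b with
      | false =>
        refine (fixAt_res_false_subset q πl πr s r
          ((ih πl hsub).trans (Finset.subset_insert _ _))).trans ?_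
        grind
      | true =>
        refine (fixAt_res_true_subset q πl πr s r
          ((ih πr hsub).trans (Finset.subset_insert _ _))).trans ?_
        grind

theorem fixAt_subset_of_safeAt (ℓ : PLit A) (s : List Bool) {C : Finset (PLit A)} (π : Prf A C)
    (r : (D : Finset (PLit A)) × Prf A D) {Cη : Finset (PLit A)} (η : Prf A Cη)
    (hsub : subAt π s = some ⟨Cη, η⟩) (hr : r.1 ⊆ insert ℓ Cη) (hsafe : SafeAt π s ℓ) :
    (fixAt π s r).1 ⊆ C := by
  induction s generalizing C with
  | nil => cases π <;> exact hsafe.elim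
  | cons b s ih =>
    cases π with
    | ax => exact hsafe.elim
    | res q πl πr =>
      cases b with
      | false =>
        refine fixAt_res_false_subset q πl πr s r ?_
        rcases hsafe with rfl | hsafe
        · exact fixAt_subset_insert _ s πl r η hsub hr
        · exact (ih πl hsub hsafe).trans (Finset.subset_insert _ _)
      | true =>
        refine fixAt_res_true_subset q πl πr s r ?_
        rcases hsafe with rfl | hsafe
        · exact fixAt_subset_insert _ s πr r η hsub hr
        · exact (ih πr hsub hsafe).trans (Finset.subset_insert _ _)

theorem regularization_subsumes_general {C : Finset (PLit A)} (π : Prf A C)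
    (s : List Bool) (Cη : Finset (PLit A)) (η : Prf A Cη)
    (hsub : subAt π s = some ⟨Cη, η⟩)
    (p : PLit A) (hsafe : SafeAt π s p) :
    (fixAt π s ⟨Cη.erase p, Prf.ax (Cη.erase p)⟩).1 ⊆ C :=
  fixAt_subset_of_safeAt p s π _ η hsub
    ((Finset.erase_subset p Cη).trans (Finset.subset_insert p Cη)) hsafe

/-- In a propositional resolution proof, if in every path from a node `η`
to the root there is a resolution step with pivot `p` where the `p`-side premise lies on
the path (i.e., `p` is safe for `η`), then deleting an occurrence of `p` from the clause
at `η` still yields, after fixing the proof, a root clause that subsumes the original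
root clause (propositional subsumption being set inclusion). -/
theorem regularization_subsumes {C : Finset (PLit A)} (π : Prf A C)
    (s : List Bool) (Cη : Finset (PLit A)) (η : Prf A Cη)
    (hsub : subAt π s = some ⟨Cη, η⟩)
    (p : PLit A) (hp : p ∈ Cη) (hsafe : SafeAt π s p) :
    (fixAt π s ⟨Cη.erase p, Prf.ax (Cη.erase p)⟩).1 ⊆ C :=
  regularization_subsumes_general π s Cη η hsub p hsafe
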